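/- Let (A, Con, Δ) be a normal default structure with trivial entailment. For any finite consistent sets P, Q and any extension R, if P ε R and Q ⊆ R, then (P ∪ Q) ε R. -/

import Mathlib

/-- A set is consistent if every finite subset of it lies in Con. -/
def IsCons {α : Type*} (Con : Set α → Prop) (S : Set α) : Prop :=
  ∀ X : Set α, X ⊆ S → X.Finite → Con X

/-- With trivial entailment: φ(x, S, 0) = x and
φ(x, S, i+1) = φ(x, S, i) ∪ {a | (X, a) ∈ Δ, X ⊆ φ(x, S, i), {a} ∪ S consistent}. -/
def phiT {α : Type*} (Con : Set α → Prop) (Δ : Set (Set α × α)) (x S : Set α) :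
    ℕ → Set α
  | 0 => x
  | i + 1 =>
      phiT Con Δ x S i ∪
        {a | ∃ X : Set α, (X, a) ∈ Δ ∧ X ⊆ phiT Con Δ x S i ∧ IsCons Con ({a} ∪ S)}

/-- Φ(x, S) = ⋃_{i≥0} φ(x, S, i). -/
def PhiT {α : Type*} (Con : Set α → Prop) (Δ : Set (Set α × α)) (x S : Set α) : Set α :=
  ⋃ i, phiT Con Δ x S i

/-- A consistent set y is an extension of x (x ε y) if Φ(x, y) = y. -/
def ExtT {α : Type*} (Con : Set α → Prop) (Δ : Set (Set α × α)) (x y : Set α) : Prop :=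
  IsCons Con y ∧ PhiT Con Δ x y = y

/-- Skeptical nonmonotonic consequence: X |~ a iff a belongs to every extension of X. -/
def Nmc {α : Type*} (Con : Set α → Prop) (Δ : Set (Set α × α)) (X : Set α) (a : α) : Prop :=
  ∀ y : Set α, ExtT Con Δ X y → a ∈ y

/-- X |~ Y iff X |~ b for every b ∈ Y. -/
def NmcS {α : Type*} (Con : Set α → Prop) (Δ : Set (Set α × α)) (X Y : Set α) : Prop :=
  ∀ b ∈ Y, Nmc Con Δ X b

/-!
`Φ(x, S)` is the least set containing `x` that is closed under the defaults applicable
relative to `S`. If `x ε y` then `y = Φ(x, y)` is such a set; when `x ⊆ x' ⊆ y` it contains `x'`,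
so `Φ(x', y) ⊆ y`, while `y = Φ(x, y) ⊆ Φ(x', y)` by monotonicity. Closure of `Φ(x, S)` itself
under the defaults uses that premises are finite: a finite premise inside the increasing union
`⋃ i, φ(x, S, i)` already lies in one stage.
-/

def RuleClosed {α : Type*} (Con : Set α → Prop) (Δ : Set (Set α × α)) (S T : Set α) : Prop :=
  ∀ X a, (X, a) ∈ Δ → X ⊆ T → IsCons Con ({a} ∪ S) → a ∈ T

section

variable {α : Type*} {Con : Set α → Prop} {Δ : Set (Set α × α)} {x x' y S T : Set α}

theorem phiT_mono_left (h : x ⊆ x') (i : ℕ) : phiT Con Δ x S i ⊆ phiT Con Δ x' S i := by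
  induction i with
  | zero => exact h
  | succ i ih =>
    rintro a (ha | ⟨X, hX, hXi, hcons⟩)
    · exact Or.inl (ih ha)
    · exact Or.inr ⟨X, hX, hXi.trans ih, hcons⟩

theorem phiT_monotone : Monotone (phiT Con Δ x S) :=
  monotone_nat_of_le_succ fun _ => Set.subset_union_left

theorem PhiT_mono_left (h : x ⊆ x') : PhiT Con Δ x S ⊆ PhiT Con Δ x' S :=
  Set.iUnion_mono (phiT_mono_left h)

theorem subset_PhiT : x ⊆ PhiT Con Δ x S :=
  Set.subset_iUnion (phiT Con Δ x S) 0

theorem PhiT_subset_of_ruleClosed (hxT : x ⊆ T) (hT : RuleClosed Con Δ S T) :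
    PhiT Con Δ x S ⊆ T := by
  refine Set.iUnion_subset fun i => ?_
  induction i with
  | zero => exact hxT
  | succ i ih =>
    rintro a (ha | ⟨X, hX, hXi, hcons⟩)
    · exact ih ha
    · exact hT X a hX (hXi.trans ih) hcons

theorem ruleClosed_PhiT (hΔ : ∀ p ∈ Δ, p.1.Finite) : RuleClosed Con Δ S (PhiT Con Δ x S) := by
  intro X a hX hXPhi hcons
  have hfin : X.Finite := hΔ _ hX
  obtain ⟨i, hi⟩ := phiT_monotone.directed_le.exists_mem_subset_of_finset_subset_biUnion
    (s := hfin.toFinset) (by simpa [PhiT] using hXPhi)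
  exact Set.mem_iUnion_of_mem (i + 1) (Or.inr ⟨X, hX, by simpa using hi, hcons⟩)

theorem ExtT.of_subset_of_subset (hΔ : ∀ p ∈ Δ, p.1.Finite) (h : ExtT Con Δ x y)
    (hxx' : x ⊆ x') (hx'y : x' ⊆ y) : ExtT Con Δ x' y := by
  obtain ⟨hcons, hfix⟩ := h
  refine ⟨hcons, (PhiT_subset_of_ruleClosed hx'y ?_).antisymm ?_⟩
  · simpa only [hfix] using ruleClosed_PhiT (Con := Con) (x := x) (S := y) hΔ
  · simpa only [hfix] using PhiT_mono_left (Con := Con) (Δ := Δ) (S := y) hxx'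

end

theorem extension_absorbs_general {α : Type*} (Con : Set α → Prop) (Δ : Set (Set α × α))
    -- Con is a collection of finite subsets of A with ∅ ∈ Con, closed under
    -- subsets, containing every singleton
    (hCfin : ∀ X : Set α, Con X → X.Finite)
    -- Δ is a set of normal default rules, each a pair (X, a) with X ∈ Con
    (hDelta : ∀ p ∈ Δ, Con p.1) :
    ∀ P Q R : Set α, Con P → Con Q → ExtT Con Δ P R → Q ⊆ R →
      ExtT Con Δ (P ∪ Q) R := by
  intro P Q R _ _ hext hQR
  have hPR : P ⊆ R := hext.2 ▸ subset_PhiT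
  exact hext.of_subset_of_subset (fun p hp => hCfin _ (hDelta p hp)) Set.subset_union_left
    (Set.union_subset hPR hQR)

/-- if P ε R and Q ⊆ R, then (P ∪ Q) ε R. -/
theorem extension_absorbs {α : Type*} (Con : Set α → Prop) (Δ : Set (Set α × α))
    -- Con is a collection of finite subsets of A with ∅ ∈ Con, closed under
    -- subsets, containing every singleton
    (hCfin : ∀ X : Set α, Con X → X.Finite)
    (hCempty : Con ∅)
    (hCsub : ∀ X Y : Set α, X ⊆ Y → Con Y → Con X)
    (hCsing : ∀ a : α, Con {a})
    -- Δ is a set of normal default rules, each a pair (X, a) with X ∈ Con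
    (hDelta : ∀ p ∈ Δ, Con p.1) :
    ∀ P Q R : Set α, Con P → Con Q → ExtT Con Δ P R → Q ⊆ R →
      ExtT Con Δ (P ∪ Q) R :=
  extension_absorbs_general Con Δ hCfin hDelta
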